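/- arXiv:1412.4523 — 2 statements merged into one kernel-verified Lean document; each statement's English description precedes it below -/
import Mathlib

section
/- Let A be the ℂ-algebra of ℂ-linear operators on the ring ℂ[x, u, u^{−1}] generated by: multiplication by x, multiplication by u, multiplication by u^{−1}, and the derivation D determined by D(x) = 0, D(u^m) = m·u^m (so D = u d/du, thought of as ∂_t with u = e^t, and x commuting with everything). Define D_eu = (xD)^5 − u·(5D+9)(5D+8)(5D+7)(5D+6)(5D+5) and D_loc = (xD)^5 − u·(5D+4)(5D+3)(5D+2)(5D+1)(5D). Then the operator identity D_eu ∘ (u^{−1} D^5) = D^5 ∘ (u^{−1} D_loc) holds in A. -/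
/-- The operator identity `D_eu ∘ (u⁻¹ D^5) = D^5 ∘ (u⁻¹ D_loc)` in the algebra of
differential operators on `ℂ[x, u, u⁻¹]`, with `x` central, `u u⁻¹ = u⁻¹ u = 1`,
and `D u = u (D + 1)` (where `D = u d/du`). Here
`D_eu = (xD)^5 - u(5D+9)(5D+8)(5D+7)(5D+6)(5D+5)` and
`D_loc = (xD)^5 - u(5D+4)(5D+3)(5D+2)(5D+1)(5D)`. -/
theorem quintic_operator_factorization
    {A : Type*} [Ring A] [Algebra ℂ A]
    (x u v D : A)
    (hxu : x * u = u * x) (hxv : x * v = v * x) (hxD : x * D = D * x)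
    (huv : u * v = 1) (hvu : v * u = 1)
    (hDu : D * u = u * (D + 1)) :
    ((x * D) ^ 5 -
        u * ((5 * D + 9) * (5 * D + 8) * (5 * D + 7) * (5 * D + 6) * (5 * D + 5))) *
        (v * D ^ 5) =
      D ^ 5 *
        (v * ((x * D) ^ 5 -
          u * ((5 * D + 4) * (5 * D + 3) * (5 * D + 2) * (5 * D + 1) * (5 * D)))) := by
  have cxD : Commute x D := hxD
  have cxv : Commute x v := hxv
  have hvD : v * D = (D + 1) * v := by
    calc v * D = v * D * (u * v) := by rw [huv, mul_one]
      _ = v * (D * u) * v := by noncomm_ring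
      _ = v * (u * (D + 1)) * v := by rw [hDu]
      _ = (v * u) * (D + 1) * v := by noncomm_ring
      _ = (D + 1) * v := by rw [hvu, one_mul]
  have hDv : D * v = v * (D - 1) := by
    calc D * v = (D + 1) * v - v := by noncomm_ring
      _ = v * D - v := by rw [← hvD]
      _ = v * (D - 1) := by noncomm_ring
  have hD5v : D ^ 5 * v = v * (D - 1) ^ 5 := by
    have h : ∀ n : ℕ, D ^ n * v = v * (D - 1) ^ n := by
      intro n
      induction n with
      | zero => simp
      | succ n ih =>
        calc D ^ (n + 1) * v = D ^ n * (D * v) := by rw [pow_succ, mul_assoc]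
          _ = D ^ n * v * (D - 1) := by rw [hDv, mul_assoc]
          _ = v * (D - 1) ^ n * (D - 1) := by rw [ih]
          _ = v * (D - 1) ^ (n + 1) := by rw [pow_succ, mul_assoc]
    exact h 5
  -- shift lemmas
  have s5 : (5 * D + 5) * v = v * (5 * D) := by
    calc (5 * D + 5) * v = 5 * (D * v) + 5 * v := by noncomm_ring
      _ = 5 * (v * (D - 1)) + 5 * v := by rw [hDv]
      _ = v * (5 * D) := by noncomm_ring
  have s6 : (5 * D + 6) * v = v * (5 * D + 1) := by
    calc (5 * D + 6) * v = 5 * (D * v) + 6 * v := by noncomm_ring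
      _ = 5 * (v * (D - 1)) + 6 * v := by rw [hDv]
      _ = v * (5 * D + 1) := by noncomm_ring
  have s7 : (5 * D + 7) * v = v * (5 * D + 2) := by
    calc (5 * D + 7) * v = 5 * (D * v) + 7 * v := by noncomm_ring
      _ = 5 * (v * (D - 1)) + 7 * v := by rw [hDv]
      _ = v * (5 * D + 2) := by noncomm_ring
  have s8 : (5 * D + 8) * v = v * (5 * D + 3) := by
    calc (5 * D + 8) * v = 5 * (D * v) + 8 * v := by noncomm_ring
      _ = 5 * (v * (D - 1)) + 8 * v := by rw [hDv]
      _ = v * (5 * D + 3) := by noncomm_ring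
  have s9 : (5 * D + 9) * v = v * (5 * D + 4) := by
    calc (5 * D + 9) * v = 5 * (D * v) + 9 * v := by noncomm_ring
      _ = 5 * (v * (D - 1)) + 9 * v := by rw [hDv]
      _ = v * (5 * D + 4) := by noncomm_ring
  have t2 : (5 * D + 6) * ((5 * D + 5) * v) = v * ((5 * D + 1) * (5 * D)) := by
    rw [s5, ← mul_assoc, s6, mul_assoc]
  have t3 : (5 * D + 7) * ((5 * D + 6) * ((5 * D + 5) * v))
      = v * ((5 * D + 2) * ((5 * D + 1) * (5 * D))) := by
    rw [t2, ← mul_assoc, s7, mul_assoc]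
  have t4 : (5 * D + 8) * ((5 * D + 7) * ((5 * D + 6) * ((5 * D + 5) * v)))
      = v * ((5 * D + 3) * ((5 * D + 2) * ((5 * D + 1) * (5 * D)))) := by
    rw [t3, ← mul_assoc, s8, mul_assoc]
  have t5 : (5 * D + 9) * ((5 * D + 8) * ((5 * D + 7) * ((5 * D + 6) * ((5 * D + 5) * v))))
      = v * ((5 * D + 4) * ((5 * D + 3) * ((5 * D + 2) * ((5 * D + 1) * (5 * D))))) := by
    rw [t4, ← mul_assoc, s9, mul_assoc]
  have hPv : (5 * D + 9) * (5 * D + 8) * (5 * D + 7) * (5 * D + 6) * (5 * D + 5) * v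
      = v * ((5 * D + 4) * (5 * D + 3) * (5 * D + 2) * (5 * D + 1) * (5 * D)) := by
    calc (5 * D + 9) * (5 * D + 8) * (5 * D + 7) * (5 * D + 6) * (5 * D + 5) * v
        = (5 * D + 9) * ((5 * D + 8) * ((5 * D + 7) * ((5 * D + 6) * ((5 * D + 5) * v)))) := by
          noncomm_ring
      _ = v * ((5 * D + 4) * ((5 * D + 3) * ((5 * D + 2) * ((5 * D + 1) * (5 * D))))) := t5
      _ = v * ((5 * D + 4) * (5 * D + 3) * (5 * D + 2) * (5 * D + 1) * (5 * D)) := by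
          noncomm_ring
  -- Q commutes with D
  have c5 : Commute D (5 : A) := Commute.ofNat_right D 5
  have cD : ∀ c : A, Commute D c → Commute D (5 * D + c) :=
    fun c hc => (c5.mul_right (Commute.refl D)).add_right hc
  have cQ : Commute D ((5 * D + 4) * (5 * D + 3) * (5 * D + 2) * (5 * D + 1) * (5 * D)) :=
    ((((cD 4 (Commute.ofNat_right D 4)).mul_right (cD 3 (Commute.ofNat_right D 3))).mul_right
      (cD 2 (Commute.ofNat_right D 2))).mul_right (cD 1 (Commute.one_right D))).mul_right
      (c5.mul_right (Commute.refl D))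
  have hDQ : D ^ 5 * ((5 * D + 4) * (5 * D + 3) * (5 * D + 2) * (5 * D + 1) * (5 * D))
      = (5 * D + 4) * (5 * D + 3) * (5 * D + 2) * (5 * D + 1) * (5 * D) * D ^ 5 :=
    (cQ.pow_left 5).eq
  have hx5v : x ^ 5 * v = v * x ^ 5 := (cxv.pow_left 5).eq
  have hD1x5 : (D - 1) ^ 5 * x ^ 5 = x ^ 5 * (D - 1) ^ 5 :=
    (((cxD.symm.sub_left (Commute.one_left x)).pow_pow 5 5)).eq
  have hxD5 : (x * D) ^ 5 = x ^ 5 * D ^ 5 := cxD.mul_pow 5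
  calc ((x * D) ^ 5 -
        u * ((5 * D + 9) * (5 * D + 8) * (5 * D + 7) * (5 * D + 6) * (5 * D + 5))) *
        (v * D ^ 5)
      = x ^ 5 * (D ^ 5 * v) * D ^ 5 -
        u * ((5 * D + 9) * (5 * D + 8) * (5 * D + 7) * (5 * D + 6) * (5 * D + 5) * v) * D ^ 5 := by
        rw [hxD5]; noncomm_ring
    _ = x ^ 5 * (v * (D - 1) ^ 5) * D ^ 5 -
        u * (v * ((5 * D + 4) * (5 * D + 3) * (5 * D + 2) * (5 * D + 1) * (5 * D))) * D ^ 5 := by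
        rw [hD5v, hPv]
    _ = (x ^ 5 * v) * (D - 1) ^ 5 * D ^ 5 -
        (u * v) * ((5 * D + 4) * (5 * D + 3) * (5 * D + 2) * (5 * D + 1) * (5 * D)) * D ^ 5 := by
        noncomm_ring
    _ = v * (x ^ 5 * (D - 1) ^ 5 * D ^ 5) -
        (5 * D + 4) * (5 * D + 3) * (5 * D + 2) * (5 * D + 1) * (5 * D) * D ^ 5 := by
        rw [hx5v, huv, one_mul]; noncomm_ring
    _ = (v * (D - 1) ^ 5) * (x ^ 5 * D ^ 5) -
        D ^ 5 * ((5 * D + 4) * (5 * D + 3) * (5 * D + 2) * (5 * D + 1) * (5 * D)) := by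
        rw [hDQ, ← hD1x5]; noncomm_ring
    _ = (D ^ 5 * v) * (x ^ 5 * D ^ 5) -
        D ^ 5 * ((v * u) * ((5 * D + 4) * (5 * D + 3) * (5 * D + 2) * (5 * D + 1) * (5 * D))) := by
        rw [hD5v, hvu, one_mul]
    _ = D ^ 5 *
        (v * ((x * D) ^ 5 -
          u * ((5 * D + 4) * (5 * D + 3) * (5 * D + 2) * (5 * D + 1) * (5 * D)))) := by
        rw [hxD5]; noncomm_ring
end

section
/- Let A be an associative ℂ-algebra containing elements x, u, u^{−1}, ∂ and a scalar σ ∈ ℂ, subject to the relations: x commutes with ∂, x commutes with u, u·u^{−1} = u^{−1}·u = 1, and ∂·u = u·(∂ + 1). Let M be a left A-module and T₀, T₁, T₂, T₃, T₄ ∈ M satisfy: x∂·T₀ = (5∂+σ+3/2)·T₁, x∂·T₁ = (5∂+σ+1/2)·T₂, x∂·T₂ = (5∂+σ−1/2)·T₃, x∂·T₃ = (5∂+σ−3/2)·T₄, and x∂·T₄ = u·(5∂+σ+5/2)·T₀. Then ((x∂)^5 − u·(5∂+σ+13/2)(5∂+σ+11/2)(5∂+σ+9/2)(5∂+σ+7/2)(5∂+σ+5/2))·T₀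 = 0. -/
/-- Derivation of the scalar differential equation for `T₀` (eq. `diffeq_T0` for `ℙ⁴`):
from the first-order recursions of the second structure connection one gets
`((x∂)^5 - u(5∂+σ+13/2)(5∂+σ+11/2)(5∂+σ+9/2)(5∂+σ+7/2)(5∂+σ+5/2)) T₀ = 0`. -/
theorem second_structure_connection_ODE
    {A : Type*} [Ring A] [Algebra ℂ A]
    {M : Type*} [AddCommGroup M] [Module A M]
    (x u v d : A) (σ : ℂ)
    (hxd : x * d = d * x) (hxu : x * u = u * x)
    (huv : u * v = 1) (hvu : v * u = 1)
    (hdu : d * u = u * (d + 1))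
    (T₀ T₁ T₂ T₃ T₄ : M)
    (h0 : (x * d) • T₀ = (5 * d + algebraMap ℂ A (σ + 3/2)) • T₁)
    (h1 : (x * d) • T₁ = (5 * d + algebraMap ℂ A (σ + 1/2)) • T₂)
    (h2 : (x * d) • T₂ = (5 * d + algebraMap ℂ A (σ - 1/2)) • T₃)
    (h3 : (x * d) • T₃ = (5 * d + algebraMap ℂ A (σ - 3/2)) • T₄)
    (h4 : (x * d) • T₄ = (u * (5 * d + algebraMap ℂ A (σ + 5/2))) • T₀) :
    ((x * d) ^ 5 -
        u * ((5 * d + algebraMap ℂ A (σ + 13/2)) * (5 * d + algebraMap ℂ A (σ + 11/2)) *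
          (5 * d + algebraMap ℂ A (σ + 9/2)) * (5 * d + algebraMap ℂ A (σ + 7/2)) *
          (5 * d + algebraMap ℂ A (σ + 5/2)))) • T₀ = 0 := by
  have hxd_d : Commute (x * d) d := (show Commute x d from hxd).mul_left (Commute.refl d)
  have hP : ∀ c : ℂ, Commute (x * d) (5 * d + algebraMap ℂ A c) := fun c =>
    ((Commute.ofNat_right (x * d) 5).mul_right hxd_d).add_right
      (Algebra.commutes c (x * d)).symm
  have hshift : ∀ c c' : ℂ, c + 5 = c' →
      (5 * d + algebraMap ℂ A c) * u = u * (5 * d + algebraMap ℂ A c') := by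
    intro c c' h
    have h5 : algebraMap ℂ A c' = algebraMap ℂ A c + 5 := by
      rw [← h, map_add, map_ofNat]
    calc (5 * d + algebraMap ℂ A c) * u
        = 5 * (d * u) + algebraMap ℂ A c * u := by noncomm_ring
      _ = 5 * (u * (d + 1)) + u * algebraMap ℂ A c := by rw [hdu, Algebra.commutes]
      _ = u * (5 * d + (algebraMap ℂ A c + 5)) := by noncomm_ring
      _ = u * (5 * d + algebraMap ℂ A c') := by rw [h5]
  have step : ∀ (n : ℕ) (a : A) (T T' : M), (x * d) • T = a • T' → Commute (x * d) a →
      ((x * d) ^ (n + 1)) • T = a • (((x * d) ^ n) • T') := by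
    intro n a T T' h hc
    calc ((x * d) ^ (n + 1)) • T = ((x * d) ^ n * (x * d)) • T := by rw [pow_succ]
      _ = ((x * d) ^ n) • ((x * d) • T) := mul_smul _ _ _
      _ = ((x * d) ^ n) • (a • T') := by rw [h]
      _ = (((x * d) ^ n) * a) • T' := (mul_smul _ _ _).symm
      _ = (a * (x * d) ^ n) • T' := by rw [(hc.pow_left n).eq]
      _ = a • (((x * d) ^ n) • T') := mul_smul _ _ _
  have e0 := step 4 _ _ _ h0 (hP _)
  have e1 := step 3 _ _ _ h1 (hP _)
  have e2 := step 2 _ _ _ h2 (hP _)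
  have e3 := step 1 _ _ _ h3 (hP _)
  have e4 : ((x * d) ^ 1) • T₄ = (u * (5 * d + algebraMap ℂ A (σ + 5/2))) • T₀ := by
    rw [pow_one]; exact h4
  have chain : ((x * d) ^ 5) • T₀ =
      ((5 * d + algebraMap ℂ A (σ + 3/2)) * ((5 * d + algebraMap ℂ A (σ + 1/2)) *
        ((5 * d + algebraMap ℂ A (σ - 1/2)) * ((5 * d + algebraMap ℂ A (σ - 3/2)) *
          (u * (5 * d + algebraMap ℂ A (σ + 5/2))))))) • T₀ := by
    rw [e0, e1, e2, e3, e4, smul_smul, smul_smul, smul_smul, smul_smul]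
    congr 1
    noncomm_ring
  have elem : (5 * d + algebraMap ℂ A (σ + 3/2)) * ((5 * d + algebraMap ℂ A (σ + 1/2)) *
        ((5 * d + algebraMap ℂ A (σ - 1/2)) * ((5 * d + algebraMap ℂ A (σ - 3/2)) *
          (u * (5 * d + algebraMap ℂ A (σ + 5/2)))))) =
      u * ((5 * d + algebraMap ℂ A (σ + 13/2)) * (5 * d + algebraMap ℂ A (σ + 11/2)) *
        (5 * d + algebraMap ℂ A (σ + 9/2)) * (5 * d + algebraMap ℂ A (σ + 7/2)) *
        (5 * d + algebraMap ℂ A (σ + 5/2))) := by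
    rw [show (5 * d + algebraMap ℂ A (σ - 3/2)) * (u * (5 * d + algebraMap ℂ A (σ + 5/2)))
        = u * ((5 * d + algebraMap ℂ A (σ + 7/2)) * (5 * d + algebraMap ℂ A (σ + 5/2))) by
      rw [← mul_assoc, hshift (σ - 3/2) (σ + 7/2) (by ring), mul_assoc]]
    rw [← mul_assoc (5 * d + algebraMap ℂ A (σ - 1/2)), hshift (σ - 1/2) (σ + 9/2) (by ring), mul_assoc]
    rw [← mul_assoc (5 * d + algebraMap ℂ A (σ + 1/2)), hshift (σ + 1/2) (σ + 11/2) (by ring), mul_assoc]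
    rw [← mul_assoc (5 * d + algebraMap ℂ A (σ + 3/2)), hshift (σ + 3/2) (σ + 13/2) (by ring), mul_assoc]
    noncomm_ring
  rw [sub_smul, chain, elem, sub_self]
end
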